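/- arXiv:2604.01242 — 2 statements merged into one kernel-verified Lean document; each statement's English description precedes it below -/
import Mathlib

section
/- Let n be a positive integer and let E : ℝⁿ → ℝ be continuous with a unique global minimizer u* (so E(u*) < E(u) for all u ≠ u*). Assume that (i) for every δ > 0, the infimum of E over {u : ‖u − u*‖ ≥ δ} is strictly greater than E(u*), and (ii) there exists ε₀ > 0 such that u ↦ exp(−E(u)/ε₀) is Lebesgue-integrable on ℝⁿ. For each ε ∈ (0, ε₀], let μ_ε be the probability measure on ℝⁿ with density exp(−E(u)/ε) / Z_ε, where Z_ε = ∫ exp(−E(u)/ε) du. Then μ_ε converges weakly to the Dirac measure at u* as ε → 0⁺; equivalently, for every bounded continuous g : ℝⁿ → ℝ, ∫ g dμ_ε → g(u*). -/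
/-! Let `m = E u*`. Outside an open neighbourhood `U` of `u*` we have `E ≥ c > m`, so comparing
with the integrable weight at `ε₀` gives `∫_{Uᶜ} e^{-E/ε} ≤ e^{c/ε₀ - c/ε} Z_{ε₀}`, while on a small
open set `V ∋ u*` of finite measure `E < b` for some `m < b < c`, so `Z_ε ≥ e^{-b/ε} |V|`.
Hence `μ_ε(Uᶜ) = O(e^{-(c-b)/ε}) → 0`: the Gibbs measures lose all mass away from `u*`, and
probability measures with this property converge weakly to the Dirac mass at `u*`. -/

open MeasureTheory Filter Set Real
open scoped Topology BoundedContinuousFunction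

lemma exp_neg_div_le_exp_mul_exp_neg_div {c t ε ε₀ : ℝ} (hε : 0 < ε) (hεε₀ : ε ≤ ε₀)
    (hct : c ≤ t) : exp (-t / ε) ≤ exp (c / ε₀ - c / ε) * exp (-t / ε₀) := by
  rw [← exp_add, exp_le_exp]
  have h := div_le_div_of_nonneg_left (sub_nonneg.2 hct) hε hεε₀
  rw [sub_div, sub_div] at h
  rw [neg_div, neg_div]
  linarith

lemma tendsto_exp_neg_div_nhdsGT_zero {k : ℝ} (hk : 0 < k) :
    Tendsto (fun ε => exp (-k / ε)) (𝓝[>] 0) (𝓝 0) := by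
  refine tendsto_exp_atBot.comp ?_
  have h := tendsto_neg_atTop_atBot.comp (tendsto_inv_nhdsGT_zero.const_mul_atTop hk)
  exact h.congr fun ε => by simp [div_eq_mul_inv]

theorem tendsto_integral_of_tendsto_measureReal_compl {X ι : Type*} [TopologicalSpace X]
    [MeasurableSpace X] [OpensMeasurableSpace X] {l : Filter ι} {ν : ι → Measure X} {x : X}
    (hν : ∀ᶠ i in l, IsProbabilityMeasure (ν i))
    (hconc : ∀ U, IsOpen U → x ∈ U → Tendsto (fun i => (ν i).real Uᶜ) l (𝓝 0))
    (g : X →ᵇ ℝ) : Tendsto (fun i => ∫ u, g u ∂ν i) l (𝓝 (g x)) := by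
  rw [Metric.tendsto_nhds]
  intro η hη
  set U := {u | dist (g u) (g x) < η / 2}
  have hU : IsOpen U := isOpen_lt (g.continuous.dist continuous_const) continuous_const
  have hUc : MeasurableSet Uᶜ := hU.isClosed_compl.measurableSet
  have hxU : x ∈ U := by simpa [U] using half_pos hη
  have hbound : Tendsto (fun i => η / 2 + 2 * ‖g‖ * (ν i).real Uᶜ) l (𝓝 (η / 2)) := by
    simpa using ((hconc U hU hxU).const_mul (2 * ‖g‖)).const_add (η / 2)
  filter_upwards [hν, hbound.eventually_lt_const (half_lt_self hη)] with i hi hlt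
  have hpoint : ∀ u, |g u - g x| ≤ η / 2 + 2 * ‖g‖ * Uᶜ.indicator 1 u := by
    intro u
    by_cases hu : u ∈ U
    · simpa [hu, Real.dist_eq] using (show dist (g u) (g x) < η / 2 from hu).le
    · simpa [hu, Real.dist_eq] using
        (g.dist_le_two_norm u x).trans (le_add_of_nonneg_left (half_pos hη).le)
  have hgi : Integrable g (ν i) := g.integrable (ν i)
  have hind : Integrable (fun u => 2 * ‖g‖ * Uᶜ.indicator 1 u) (ν i) :=
    ((integrable_const 1).indicator hUc).const_mul _
  calc dist (∫ u, g u ∂ν i) (g x) = |∫ u, (g u - g x) ∂ν i| := by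
        rw [integral_sub hgi (integrable_const _), integral_const, Real.dist_eq]
        simp
    _ ≤ ∫ u, |g u - g x| ∂ν i := abs_integral_le_integral_abs
    _ ≤ ∫ u, (η / 2 + 2 * ‖g‖ * Uᶜ.indicator 1 u) ∂ν i :=
        integral_mono (hgi.sub (integrable_const _)).abs ((integrable_const _).add hind) hpoint
    _ = η / 2 + 2 * ‖g‖ * (ν i).real Uᶜ := by
        rw [integral_add (integrable_const _) hind, integral_const_mul,
          integral_indicator_one hUc]
        simp
    _ < η := hlt

section Gibbs

variable {X : Type*} [MeasurableSpace X] {μ : Measure X} {E : X → ℝ} {b c ε ε₀ : ℝ}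

lemma integrable_exp_neg_div_of_le (hE : Measurable E) (hc : ∀ u, c ≤ E u)
    (hint : Integrable (fun u => exp (-E u / ε₀)) μ) (hε : 0 < ε) (hεε₀ : ε ≤ ε₀) :
    Integrable (fun u => exp (-E u / ε)) μ :=
  (hint.const_mul (exp (c / ε₀ - c / ε))).mono' (by fun_prop) <| .of_forall fun u => by
    rw [norm_of_nonneg (exp_pos _).le]
    exact exp_neg_div_le_exp_mul_exp_neg_div hε hεε₀ (hc u)

lemma setIntegral_exp_neg_div_le {s : Set X} (hs : MeasurableSet s) (hc : ∀ u ∈ s, c ≤ E u)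
    (hint₀ : Integrable (fun u => exp (-E u / ε₀)) μ)
    (hint : Integrable (fun u => exp (-E u / ε)) μ) (hε : 0 < ε) (hεε₀ : ε ≤ ε₀) :
    ∫ u in s, exp (-E u / ε) ∂μ ≤ exp (c / ε₀ - c / ε) * ∫ u, exp (-E u / ε₀) ∂μ :=
  calc ∫ u in s, exp (-E u / ε) ∂μ ≤ ∫ u in s, exp (c / ε₀ - c / ε) * exp (-E u / ε₀) ∂μ :=
        setIntegral_mono_on hint.integrableOn (hint₀.const_mul _).integrableOn hs
          fun u hu => exp_neg_div_le_exp_mul_exp_neg_div hε hεε₀ (hc u hu)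
    _ = exp (c / ε₀ - c / ε) * ∫ u in s, exp (-E u / ε₀) ∂μ := integral_const_mul _ _
    _ ≤ exp (c / ε₀ - c / ε) * ∫ u, exp (-E u / ε₀) ∂μ :=
        mul_le_mul_of_nonneg_left
          (setIntegral_le_integral hint₀ (.of_forall fun _ => (exp_pos _).le)) (exp_pos _).le

lemma exp_neg_div_mul_measureReal_le_integral {s : Set X} (hs : MeasurableSet s)
    (hμs : μ s ≠ ⊤) (hb : ∀ u ∈ s, E u ≤ b) (hint : Integrable (fun u => exp (-E u / ε)) μ)
    (hε : 0 < ε) : exp (-b / ε) * μ.real s ≤ ∫ u, exp (-E u / ε) ∂μ :=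
  calc exp (-b / ε) * μ.real s ≤ ∫ u in s, exp (-E u / ε) ∂μ :=
        setIntegral_ge_of_const_le_real hs hμs
          (fun u hu => exp_le_exp.2 (div_le_div_of_nonneg_right (neg_le_neg (hb u hu)) hε.le))
          hint.integrableOn
    _ ≤ ∫ u, exp (-E u / ε) ∂μ :=
        setIntegral_le_integral hint (.of_forall fun _ => (exp_pos _).le)

lemma measureReal_tilted (f : X → ℝ) {s : Set X} (hs : MeasurableSet s) :
    (μ.tilted f).real s = (∫ u in s, exp (f u) ∂μ) / ∫ u, exp (f u) ∂μ := by
  rw [measureReal_def, tilted_apply_eq_ofReal_integral' f hs, integral_div,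
    ENNReal.toReal_ofReal]
  exact div_nonneg (setIntegral_nonneg hs fun _ _ => (exp_pos _).le)
    (integral_nonneg fun _ => (exp_pos _).le)

theorem tilted_measureReal_le_mul_exp_neg_div {s V : Set X} (hs : MeasurableSet s)
    (hc : ∀ u ∈ s, c ≤ E u) (hV : MeasurableSet V) (hVμ : μ V ≠ ⊤) (hVpos : 0 < μ.real V)
    (hb : ∀ u ∈ V, E u ≤ b) (hint₀ : Integrable (fun u => exp (-E u / ε₀)) μ)
    (hint : Integrable (fun u => exp (-E u / ε)) μ) (hε : 0 < ε) (hεε₀ : ε ≤ ε₀) :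
    (μ.tilted fun u => -E u / ε).real s ≤
      exp (c / ε₀) * (∫ u, exp (-E u / ε₀) ∂μ) / μ.real V * exp (-(c - b) / ε) := by
  have hsplit : exp (c / ε₀ - c / ε) = exp (c / ε₀) * exp (-(c - b) / ε) * exp (-b / ε) := by
    rw [← exp_add, ← exp_add]
    ring_nf
  rw [measureReal_tilted _ hs]
  calc _ ≤ exp (c / ε₀ - c / ε) * (∫ u, exp (-E u / ε₀) ∂μ) / (exp (-b / ε) * μ.real V) :=
        div_le_div₀ (by positivity) (setIntegral_exp_neg_div_le hs hc hint₀ hint hε hεε₀)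
          (by positivity) (exp_neg_div_mul_measureReal_le_integral hV hVμ hb hint hε)
    _ = _ := by
        rw [hsplit]
        field_simp

variable [TopologicalSpace X] [OpensMeasurableSpace X] [μ.IsOpenPosMeasure]
  [IsLocallyFiniteMeasure μ] {x : X}

theorem tendsto_tilted_measureReal_compl (hE : Continuous E) (hmin : ∀ u, E x ≤ E u)
    (hint : Integrable (fun u => exp (-E u / ε₀)) μ) {U : Set X} (hU : MeasurableSet U)
    (hcU : ∃ c, E x < c ∧ ∀ u ∉ U, c ≤ E u) :
    Tendsto (fun ε => (μ.tilted fun u => -E u / ε).real Uᶜ) (𝓝[Ioc 0 ε₀] 0) (𝓝 0) := by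
  obtain ⟨c, hxc, hcU⟩ := hcU
  obtain ⟨b, hxb, hbc⟩ := exists_between hxc
  obtain ⟨B, hxB, hBo, hBμ⟩ := μ.exists_isOpen_measure_lt_top x
  set V := B ∩ E ⁻¹' Iio b
  have hVo : IsOpen V := hBo.inter (isOpen_Iio.preimage hE)
  have hVμ : μ V ≠ ⊤ := ((measure_mono inter_subset_left).trans_lt hBμ).ne
  have hVpos : 0 < μ.real V := ENNReal.toReal_pos (hVo.measure_ne_zero μ ⟨x, hxB, hxb⟩) hVμ
  have hlim : Tendsto (fun ε => exp (c / ε₀) * (∫ u, exp (-E u / ε₀) ∂μ) / μ.real V *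
      exp (-(c - b) / ε)) (𝓝[Ioc 0 ε₀] 0) (𝓝 0) := by
    simpa using ((tendsto_exp_neg_div_nhdsGT_zero (sub_pos.2 hbc)).const_mul _).mono_left
      (nhdsWithin_mono 0 Ioc_subset_Ioi_self)
  refine tendsto_of_tendsto_of_tendsto_of_le_of_le' tendsto_const_nhds hlim
    (.of_forall fun _ => measureReal_nonneg) ?_
  filter_upwards [self_mem_nhdsWithin] with ε ⟨hε, hεε₀⟩
  exact tilted_measureReal_le_mul_exp_neg_div hU.compl hcU hVo.measurableSet hVμ hVpos
    (fun u hu => hu.2.le) hint (integrable_exp_neg_div_of_le hE.measurable hmin hint hε hεε₀)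
    hε hεε₀

theorem tendsto_integral_tilted_neg_div (hE : Continuous E) (hmin : ∀ u, E x ≤ E u)
    (hcoercive : ∀ U, IsOpen U → x ∈ U → ∃ c, E x < c ∧ ∀ u ∉ U, c ≤ E u)
    (hint : Integrable (fun u => exp (-E u / ε₀)) μ) (g : X →ᵇ ℝ) :
    Tendsto (fun ε => ∫ u, g u ∂(μ.tilted fun u => -E u / ε)) (𝓝[Ioc 0 ε₀] 0) (𝓝 (g x)) := by
  have : Nonempty X := ⟨x⟩
  refine tendsto_integral_of_tendsto_measureReal_compl ?_ (fun U hU hxU =>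
    tendsto_tilted_measureReal_compl hE hmin hint hU.measurableSet (hcoercive U hU hxU)) g
  filter_upwards [self_mem_nhdsWithin] with ε ⟨hε, hεε₀⟩
  exact isProbabilityMeasure_tilted (integrable_exp_neg_div_of_le hE.measurable hmin hint hε hεε₀)

end Gibbs

theorem gibbs_measure_concentration_general
    (n : ℕ)
    (E : EuclideanSpace ℝ (Fin n) → ℝ) (hE : Continuous E)
    (ustar : EuclideanSpace ℝ (Fin n))
    (hmin : ∀ u, u ≠ ustar → E ustar < E u)
    (hcoercive : ∀ δ : ℝ, 0 < δ →
      ∃ c : ℝ, E ustar < c ∧ ∀ u, δ ≤ ‖u - ustar‖ → c ≤ E u)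
    (ε₀ : ℝ)
    (hint : Integrable (fun u => Real.exp (-E u / ε₀)) volume)
    (Z : ℝ → ℝ) (hZ : ∀ ε, Z ε = ∫ u, Real.exp (-E u / ε) ∂volume)
    (μ : ℝ → Measure (EuclideanSpace ℝ (Fin n)))
    (hμ : ∀ ε, μ ε = volume.withDensity
      (fun u => ENNReal.ofReal (Real.exp (-E u / ε) / Z ε))) :
    ∀ g : BoundedContinuousFunction (EuclideanSpace ℝ (Fin n)) ℝ,
      Tendsto (fun ε => ∫ u, g u ∂(μ ε)) (nhdsWithin 0 (Set.Ioc 0 ε₀))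
        (nhds (g ustar)) := by
  have hμ_tilted : μ = fun ε => volume.tilted fun u => -E u / ε :=
    funext fun ε => by rw [hμ, hZ]; rfl
  have hle : ∀ u, E ustar ≤ E u := fun u =>
    (eq_or_ne u ustar).elim (fun h => h ▸ le_rfl) fun h => (hmin u h).le
  subst hμ_tilted
  refine tendsto_integral_tilted_neg_div hE hle (fun U hU hxU => ?_) hint
  obtain ⟨δ, hδ, hball⟩ := Metric.isOpen_iff.1 hU ustar hxU
  obtain ⟨c, hc, hcE⟩ := hcoercive δ hδ
  exact ⟨c, hc, fun u hu => hcE u (by simpa [dist_eq_norm] using mt (@hball u) hu)⟩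

/-- As the temperature `ε → 0⁺`, the Gibbs measures with density
`exp(-E(u)/ε)/Z_ε` concentrate on the unique global minimizer `u*` of `E`:
integrals of every bounded continuous function converge to its value at `u*`
(weak convergence to the Dirac measure at `u*`). -/
theorem gibbs_measure_concentration
    (n : ℕ) (hn : 0 < n)
    (E : EuclideanSpace ℝ (Fin n) → ℝ) (hE : Continuous E)
    (ustar : EuclideanSpace ℝ (Fin n))
    (hmin : ∀ u, u ≠ ustar → E ustar < E u)
    (hcoercive : ∀ δ : ℝ, 0 < δ →
      ∃ c : ℝ, E ustar < c ∧ ∀ u, δ ≤ ‖u - ustar‖ → c ≤ E u)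
    (ε₀ : ℝ) (hε₀ : 0 < ε₀)
    (hint : Integrable (fun u => Real.exp (-E u / ε₀)) volume)
    (Z : ℝ → ℝ) (hZ : ∀ ε, Z ε = ∫ u, Real.exp (-E u / ε) ∂volume)
    (μ : ℝ → Measure (EuclideanSpace ℝ (Fin n)))
    (hμ : ∀ ε, μ ε = volume.withDensity
      (fun u => ENNReal.ofReal (Real.exp (-E u / ε) / Z ε))) :
    ∀ g : BoundedContinuousFunction (EuclideanSpace ℝ (Fin n)) ℝ,
      Tendsto (fun ε => ∫ u, g u ∂(μ ε)) (nhdsWithin 0 (Set.Ioc 0 ε₀))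
        (nhds (g ustar)) :=
  gibbs_measure_concentration_general n E hE ustar hmin hcoercive ε₀ hint Z hZ μ hμ
end

section
/- Let n be a positive integer and let E : ℝⁿ → ℝ be differentiable with gradient ∇E that is Lipschitz continuous with constant L ≥ 0. Let u ∈ ℝⁿ, Δt > 0, ε ≥ 0, and let ξ be a random vector in ℝⁿ whose coordinates are independent standard Gaussian real random variables. Then the one-step physics-guided update satisfies 𝔼[ E( u − Δt·∇E(u) + √(2εΔt)·ξ ) ] ≤ E(u) − Δt·(1 − L·Δt/2)·‖∇E(u)‖² + ε·L·Δt·n. -/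
/-!
By the descent lemma `|E (x + v) - E x - ⟪∇E x, v⟫| ≤ L / 2 * ‖v‖ ^ 2`, the energy after a random
step `X = -Δt • ∇E u + σ • ξ` is bounded pointwise by a quadratic polynomial in `X`, so its
expectation only involves the first two moments of `X`. Since `ξ` is centred, `𝔼 X = -Δt • ∇E u`;
the cross term of `‖X‖²` then has mean zero, and each coordinate of `ξ` has second moment `1`, so
`𝔼 ‖X‖² = Δt² ‖∇E u‖² + σ² n`. With `σ² = 2εΔt` this is the claimed bound.
-/

open MeasureTheory ProbabilityTheory
open scoped InnerProductSpace

section Descent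

variable {H : Type*} [NormedAddCommGroup H] [InnerProductSpace ℝ H] [CompleteSpace H]
  {E : H → ℝ} {g : H → H} {L : ℝ}

theorem abs_sub_sub_inner_le_of_hasGradientAt (hgrad : ∀ x, HasGradientAt E (g x) x)
    (hLip : ∀ x y, ‖g x - g y‖ ≤ L * ‖x - y‖) (x v : H) :
    |E (x + v) - E x - ⟪g x, v⟫_ℝ| ≤ L / 2 * ‖v‖ ^ 2 := by
  -- Fence `f t` by `L / 2 * ‖v‖ ^ 2 * t ^ 2` on `[0, 1]`, comparing derivatives.
  set f : ℝ → ℝ := fun t => E (x + t • v) - E x - t * ⟪g x, v⟫_ℝ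
  have hf : ∀ t, HasDerivAt f ⟪g (x + t • v) - g x, v⟫_ℝ t := by
    intro t
    have hline : HasDerivAt (fun s : ℝ => x + s • v) v t := by
      simpa using ((hasDerivAt_id t).smul_const v).const_add x
    exact ((((hgrad (x + t • v)).hasFDerivAt.comp_hasDerivAt t hline).sub_const (E x)).sub
      ((hasDerivAt_id t).mul_const ⟪g x, v⟫_ℝ)).congr_deriv (by simp [inner_sub_left])
  have hB : ∀ t, HasDerivAt (fun t => L / 2 * ‖v‖ ^ 2 * t ^ 2) (L * ‖v‖ ^ 2 * t) t := fun t =>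
    ((hasDerivAt_pow 2 t).const_mul (L / 2 * ‖v‖ ^ 2)).congr_deriv (by norm_num; ring)
  have hbound : ∀ t ∈ Set.Ico (0 : ℝ) 1,
      ‖⟪g (x + t • v) - g x, v⟫_ℝ‖ ≤ L * ‖v‖ ^ 2 * t := by
    rintro t ⟨ht, -⟩
    calc ‖⟪g (x + t • v) - g x, v⟫_ℝ‖
        ≤ ‖g (x + t • v) - g x‖ * ‖v‖ := norm_inner_le_norm _ _
      _ ≤ L * ‖t • v‖ * ‖v‖ := by
          gcongr
          simpa using hLip (x + t • v) x
      _ = L * ‖v‖ ^ 2 * t := by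
          rw [norm_smul, Real.norm_of_nonneg ht]; ring
  have := image_norm_le_of_norm_deriv_right_le_deriv_boundary
    (fun t _ => (hf t).continuousAt.continuousWithinAt) (fun t _ => (hf t).hasDerivWithinAt)
    (by simp [f]) hB hbound (Set.right_mem_Icc.2 zero_le_one)
  simpa [f] using this

variable {Ω : Type*} [MeasurableSpace Ω] {P : Measure Ω} [IsProbabilityMeasure P]

theorem integral_comp_add_le_of_hasGradientAt (hgrad : ∀ x, HasGradientAt E (g x) x)
    (hLip : ∀ x y, ‖g x - g y‖ ≤ L * ‖x - y‖) {X : Ω → H} (hX : MemLp X 2 P) (x : H) :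
    ∫ ω, E (x + X ω) ∂P ≤
      E x + ⟪g x, ∫ ω, X ω ∂P⟫_ℝ + L / 2 * ∫ ω, ‖X ω‖ ^ 2 ∂P := by
  have hdesc := fun ω => abs_le.1 (abs_sub_sub_inner_le_of_hasGradientAt hgrad hLip x (X ω))
  have hE : Continuous E := continuous_iff_continuousAt.2 fun x => (hgrad x).continuousAt
  have hX1 : Integrable X P := hX.integrable one_le_two
  have hXsq : Integrable (fun ω => ‖X ω‖ ^ 2) P :=
    (memLp_two_iff_integrable_sq_norm hX.1).1 hX
  have hlin : Integrable (fun ω => E x + ⟪g x, X ω⟫_ℝ) P :=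
    (integrable_const _).add (hX1.const_inner _)
  -- `E (x + X)` is integrable, being within `L / 2 * ‖X‖ ^ 2` of an integrable affine function.
  have hrem : Integrable (fun ω => E (x + X ω) - (E x + ⟪g x, X ω⟫_ℝ)) P := by
    refine (hXsq.const_mul (L / 2)).mono' ?_ (.of_forall fun ω => ?_)
    · exact (hE.comp_aestronglyMeasurable (hX.1.const_add x)).sub hlin.1
    · rw [Real.norm_eq_abs, abs_le]
      constructor <;> linarith [hdesc ω]
  have hEX : Integrable (fun ω => E (x + X ω)) P :=
    (hrem.add hlin).congr (.of_forall fun ω => sub_add_cancel _ _)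
  calc ∫ ω, E (x + X ω) ∂P
      ≤ ∫ ω, (E x + ⟪g x, X ω⟫_ℝ) + L / 2 * ‖X ω‖ ^ 2 ∂P :=
        integral_mono hEX (hlin.add (hXsq.const_mul _)) fun ω => by linarith [hdesc ω]
    _ = E x + ⟪g x, ∫ ω, X ω ∂P⟫_ℝ + L / 2 * ∫ ω, ‖X ω‖ ^ 2 ∂P := by
        rw [integral_add hlin (hXsq.const_mul _), integral_add (integrable_const _)
          (hX1.const_inner _), integral_const, integral_inner hX1, integral_const_mul]
        simp

theorem integral_norm_add_sq_of_integral_eq_zero {X : Ω → H} (hX : MemLp X 2 P)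
    (hX0 : ∫ ω, X ω ∂P = 0) (a : H) :
    ∫ ω, ‖a + X ω‖ ^ 2 ∂P = ‖a‖ ^ 2 + ∫ ω, ‖X ω‖ ^ 2 ∂P := by
  have hX1 : Integrable X P := hX.integrable one_le_two
  have hXsq : Integrable (fun ω => ‖X ω‖ ^ 2) P :=
    (memLp_two_iff_integrable_sq_norm hX.1).1 hX
  have hcross : Integrable (fun ω => 2 * ⟪a, X ω⟫_ℝ) P := (hX1.const_inner a).const_mul 2
  have hlin : Integrable (fun ω => ‖a‖ ^ 2 + 2 * ⟪a, X ω⟫_ℝ) P :=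
    (integrable_const _).add hcross
  simp_rw [norm_add_sq_real]
  rw [integral_add hlin hXsq, integral_add (integrable_const _) hcross, integral_const_mul,
    integral_inner hX1, hX0, inner_zero_right]
  simp

theorem integral_comp_add_add_smul_le_of_hasGradientAt (hgrad : ∀ x, HasGradientAt E (g x) x)
    (hLip : ∀ x y, ‖g x - g y‖ ≤ L * ‖x - y‖) {ξ : Ω → H} (hξ : MemLp ξ 2 P)
    (hξ0 : ∫ ω, ξ ω ∂P = 0) (x d : H) (σ : ℝ) :
    ∫ ω, E (x + d + σ • ξ ω) ∂P ≤
      E x + ⟪g x, d⟫_ℝ + L / 2 * (‖d‖ ^ 2 + σ ^ 2 * ∫ ω, ‖ξ ω‖ ^ 2 ∂P) := by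
  have hσξ : MemLp (fun ω => σ • ξ ω) 2 P := hξ.const_smul σ
  have hσξ0 : ∫ ω, σ • ξ ω ∂P = 0 := by rw [integral_smul, hξ0, smul_zero]
  have hX : MemLp (fun ω => d + σ • ξ ω) 2 P := (memLp_const d).add hσξ
  have hmean : ∫ ω, d + σ • ξ ω ∂P = d := by
    rw [integral_add (integrable_const d) (hσξ.integrable one_le_two), hσξ0]
    simp
  have hsq : ∫ ω, ‖d + σ • ξ ω‖ ^ 2 ∂P = ‖d‖ ^ 2 + σ ^ 2 * ∫ ω, ‖ξ ω‖ ^ 2 ∂P := by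
    rw [integral_norm_add_sq_of_integral_eq_zero hσξ hσξ0, ← integral_const_mul]
    simp [norm_smul, mul_pow]
  simpa only [add_assoc, hmean, hsq] using integral_comp_add_le_of_hasGradientAt hgrad hLip hX x

end Descent

section GaussianVector

variable {Ω : Type*} [MeasurableSpace Ω] {P : Measure Ω}

theorem memLp_of_hasLaw_gaussianReal {Y : Ω → ℝ} {μ : ℝ} {v : NNReal}
    (hY : HasLaw Y (gaussianReal μ v) P) (p : NNReal) : MemLp Y p P :=
  (memLp_map_measure_iff aestronglyMeasurable_id hY.aemeasurable).1
    (hY.map_eq ▸ memLp_id_gaussianReal p)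

theorem integral_of_hasLaw_gaussianReal {Y : Ω → ℝ} {μ : ℝ} {v : NNReal}
    (hY : HasLaw Y (gaussianReal μ v) P) : ∫ ω, Y ω ∂P = μ :=
  hY.integral_eq.trans integral_id_gaussianReal

theorem integral_sq_of_hasLaw_gaussianReal {Y : Ω → ℝ} {μ : ℝ} {v : NNReal}
    (hY : HasLaw Y (gaussianReal μ v) P) : ∫ ω, Y ω ^ 2 ∂P = μ ^ 2 + v := by
  have := hY.isProbabilityMeasure
  have hvar := variance_eq_sub (memLp_of_hasLaw_gaussianReal hY 2)
  rw [hY.variance_eq, variance_id_gaussianReal, integral_of_hasLaw_gaussianReal hY] at hvar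
  simp only [Pi.pow_apply] at hvar
  linarith

variable {ι : Type*} [Fintype ι] {ξ : Ω → EuclideanSpace ℝ ι}

theorem memLp_of_forall_hasLaw_gaussianReal {μ : ℝ} {v : NNReal}
    (hξ : ∀ i, HasLaw (fun ω => ξ ω i) (gaussianReal μ v) P) (p : NNReal) : MemLp ξ p P :=
  MemLp.of_eval_piLp fun i => memLp_of_hasLaw_gaussianReal (hξ i) p

theorem integral_eq_zero_of_forall_hasLaw_gaussianReal {v : NNReal}
    (hξ : ∀ i, HasLaw (fun ω => ξ ω i) (gaussianReal 0 v) P) : ∫ ω, ξ ω ∂P = 0 := by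
  ext i
  rw [eval_integral_piLp
      (fun i => memLp_one_iff_integrable.1 (memLp_of_hasLaw_gaussianReal (hξ i) 1)),
    integral_of_hasLaw_gaussianReal (hξ i)]
  rfl

theorem integral_norm_sq_of_forall_hasLaw_gaussianReal {v : NNReal}
    (hξ : ∀ i, HasLaw (fun ω => ξ ω i) (gaussianReal 0 v) P) :
    ∫ ω, ‖ξ ω‖ ^ 2 ∂P = Fintype.card ι * v := by
  simp_rw [EuclideanSpace.real_norm_sq_eq]
  rw [integral_finsetSum _ fun i _ => (memLp_of_hasLaw_gaussianReal (hξ i) 2).integrable_sq,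
    Finset.sum_congr rfl fun i _ => integral_sq_of_hasLaw_gaussianReal (hξ i)]
  simp

end GaussianVector

theorem physics_guided_step_expected_descent_general
    {Ω : Type*} [MeasurableSpace Ω] (P : Measure Ω) [IsProbabilityMeasure P]
    (n : ℕ)
    (E : EuclideanSpace ℝ (Fin n) → ℝ)
    (g : EuclideanSpace ℝ (Fin n) → EuclideanSpace ℝ (Fin n))
    (hgrad : ∀ x, HasGradientAt E (g x) x)
    (L : ℝ)
    (hLip : ∀ x y, ‖g x - g y‖ ≤ L * ‖x - y‖)
    (u : EuclideanSpace ℝ (Fin n)) (Δt : ℝ) (hΔt : 0 < Δt) (ε : ℝ) (hε : 0 ≤ ε)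
    (ξ : Ω → EuclideanSpace ℝ (Fin n))
    (hξmeas : Measurable ξ)
    (hξlaw : ∀ i : Fin n, Measure.map (fun ω => ξ ω i) P = gaussianReal 0 1) :
    ∫ ω, E (u - Δt • g u + Real.sqrt (2 * ε * Δt) • ξ ω) ∂P ≤
      E u - Δt * (1 - L * Δt / 2) * ‖g u‖ ^ 2 + ε * L * Δt * n := by
  have hlaw : ∀ i, HasLaw (fun ω => ξ ω i) (gaussianReal 0 1) P :=
    fun i => ⟨by fun_prop, hξlaw i⟩
  have hσ : Real.sqrt (2 * ε * Δt) ^ 2 = 2 * ε * Δt := Real.sq_sqrt (by positivity)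
  have h := integral_comp_add_add_smul_le_of_hasGradientAt hgrad hLip
    (memLp_of_forall_hasLaw_gaussianReal hlaw 2)
    (integral_eq_zero_of_forall_hasLaw_gaussianReal hlaw) u (-(Δt • g u)) (Real.sqrt (2 * ε * Δt))
  rw [integral_norm_sq_of_forall_hasLaw_gaussianReal hlaw, hσ, ← sub_eq_add_neg, inner_neg_right,
    real_inner_smul_right, real_inner_self_eq_norm_sq, norm_neg, norm_smul, mul_pow] at h
  refine h.trans_eq ?_
  simp only [Fintype.card_fin, NNReal.coe_one, Real.norm_eq_abs, sq_abs]
  ring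

/-- One-step expected descent of the physics-guided (noisy gradient) update:
if `∇E` is `L`-Lipschitz and `ξ` has independent standard Gaussian
coordinates, then
`𝔼[E(u - Δt∇E(u) + √(2εΔt)ξ)] ≤ E(u) - Δt(1 - LΔt/2)‖∇E(u)‖² + εLΔt·n`. -/
theorem physics_guided_step_expected_descent
    {Ω : Type*} [MeasurableSpace Ω] (P : Measure Ω) [IsProbabilityMeasure P]
    (n : ℕ) (hn : 0 < n)
    (E : EuclideanSpace ℝ (Fin n) → ℝ)
    (g : EuclideanSpace ℝ (Fin n) → EuclideanSpace ℝ (Fin n))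
    (hgrad : ∀ x, HasGradientAt E (g x) x)
    (L : ℝ) (hL : 0 ≤ L)
    (hLip : ∀ x y, ‖g x - g y‖ ≤ L * ‖x - y‖)
    (u : EuclideanSpace ℝ (Fin n)) (Δt : ℝ) (hΔt : 0 < Δt) (ε : ℝ) (hε : 0 ≤ ε)
    (ξ : Ω → EuclideanSpace ℝ (Fin n))
    (hξmeas : Measurable ξ)
    (hξindep : iIndepFun (fun i ω => ξ ω i) P)
    (hξlaw : ∀ i : Fin n, Measure.map (fun ω => ξ ω i) P = gaussianReal 0 1) :
    ∫ ω, E (u - Δt • g u + Real.sqrt (2 * ε * Δt) • ξ ω) ∂P ≤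
      E u - Δt * (1 - L * Δt / 2) * ‖g u‖ ^ 2 + ε * L * Δt * n :=
  physics_guided_step_expected_descent_general P n E g hgrad L hLip u Δt hΔt ε hε ξ hξmeas hξlaw
end
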